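/- If ε-nets of sizes N_D and N_A exist for the unit Frobenius ball 𝒟 of s×r matrices (Frobenius distance) and the Stiefel-type set 𝒜 of q×r orthonormal-column matrices (distance d(A1,A2)=‖A1A1^T−A2A2^T‖_op), respectively, then the set Γ of s×q matrices of rank ≤ r and Frobenius norm ≤ 1 admits a 2ε-net of size at most N_D · N_A in Frobenius distance. -/

import Mathlib

open scoped BigOperators
open Matrix

/-- Frobenius norm of a real matrix. -/
noncomputable def frob {a b : ℕ} (M : Matrix (Fin a) (Fin b) ℝ) : ℝ :=
  Real.sqrt (∑ i, ∑ j, (M i j) ^ 2)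

/-- Euclidean norm of the `j`-th row of a matrix. -/
noncomputable def rnorm {a b : ℕ} (M : Matrix (Fin a) (Fin b) ℝ) (j : Fin a) : ℝ :=
  Real.sqrt (∑ k, (M j k) ^ 2)

/-- Operator (spectral) norm of a real matrix: the largest singular value. -/
noncomputable def opN {a b : ℕ} (M : Matrix (Fin a) (Fin b) ℝ) : ℝ :=
  sSup {c : ℝ | ∃ v : Fin b → ℝ, (∑ j, (v j) ^ 2) ≤ 1 ∧
    c = Real.sqrt (∑ i, (M.mulVec v i) ^ 2)}

/-! Since `rank C ≤ r ≤ q`, the rows of `C` lie in an `r`-dimensional subspace; an orthonormal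
basis of it gives `A` with `Aᵀ A = 1` and `C = C A Aᵀ`. Choose `A'` in the net with
`‖A Aᵀ - A' A'ᵀ‖_op ≤ ε`, then `D'` in the net within `ε` of `C A'`, which lies in the unit ball by
Bessel's inequality. Now `C - D' A'ᵀ = C (A Aᵀ - A' A'ᵀ) + (C A' - D') A'ᵀ`, and right
multiplication by `A'ᵀ` preserves the Frobenius norm. -/

open Module WithLp

section Frobenius

variable {a b c : ℕ}

lemma frob_le_mul_frob_of_row_sq_le {M : Matrix (Fin a) (Fin b) ℝ} {N : Matrix (Fin a) (Fin c) ℝ}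
    {κ : ℝ} (hκ : 0 ≤ κ) (h : ∀ i, ∑ j, M i j ^ 2 ≤ κ ^ 2 * ∑ j, N i j ^ 2) :
    frob M ≤ κ * frob N := by
  rw [frob, frob, ← Real.sqrt_sq hκ, ← Real.sqrt_mul (sq_nonneg κ), Finset.mul_sum]
  exact Real.sqrt_le_sqrt (Finset.sum_le_sum fun i _ => h i)

section
attribute [local instance] Matrix.frobeniusNormedAddCommGroup

lemma frob_eq_frobenius_norm (M : Matrix (Fin a) (Fin b) ℝ) : frob M = ‖M‖ := by
  simp [frob, frobenius_norm_def, Real.sqrt_eq_rpow]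

lemma frob_sub_le (X Y Z : Matrix (Fin a) (Fin b) ℝ) :
    frob (X - Z) ≤ frob (X - Y) + frob (Y - Z) := by
  simpa only [frob_eq_frobenius_norm] using norm_sub_le_norm_sub_add_norm_sub X Y Z

end

lemma sum_sq_eq_trace_mul_transpose (M : Matrix (Fin a) (Fin b) ℝ) :
    ∑ i, ∑ j, M i j ^ 2 = trace (M * Mᵀ) := by
  simp [trace, mul_apply, sq]

lemma frob_mul_transpose_of_transpose_mul_eq_one (D : Matrix (Fin a) (Fin b) ℝ)
    {A : Matrix (Fin c) (Fin b) ℝ} (hA : Aᵀ * A = 1) : frob (D * Aᵀ) = frob D := by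
  rw [frob, frob, sum_sq_eq_trace_mul_transpose, sum_sq_eq_trace_mul_transpose, transpose_mul,
    transpose_transpose, Matrix.mul_assoc, ← Matrix.mul_assoc Aᵀ, hA, Matrix.one_mul]

end Frobenius

section OperatorNorm

variable {a b c : ℕ}

lemma opN_eq_norm_toContinuousLinearMap (M : Matrix (Fin a) (Fin b) ℝ) :
    opN M = ‖LinearMap.toContinuousLinearMap (toEuclideanLin M)‖ := by
  rw [← ContinuousLinearMap.sSup_unitClosedBall_eq_norm, opN]
  congr 1
  ext c
  simp only [Set.mem_ofPred_eq, Set.mem_image, Metric.mem_closedBall, dist_zero_right,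
    EuclideanSpace.norm_eq, Real.norm_eq_abs, sq_abs, Real.sqrt_le_one,
    LinearMap.coe_toContinuousLinearMap', ofLp_toLpLin, toLin'_apply, eq_comm]
  exact ⟨fun ⟨v, hv⟩ => ⟨toLp 2 v, hv⟩, fun ⟨x, hx⟩ => ⟨ofLp x, hx⟩⟩

lemma opN_nonneg (M : Matrix (Fin a) (Fin b) ℝ) : 0 ≤ opN M := by
  rw [opN_eq_norm_toContinuousLinearMap]; exact norm_nonneg _

lemma sum_mulVec_sq_le (M : Matrix (Fin a) (Fin b) ℝ) (v : Fin b → ℝ) :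
    ∑ i, (M *ᵥ v) i ^ 2 ≤ opN M ^ 2 * ∑ j, v j ^ 2 := by
  have h := (LinearMap.toContinuousLinearMap (toEuclideanLin M)).le_opNorm (toLp 2 v)
  rw [← opN_eq_norm_toContinuousLinearMap] at h
  have h2 := pow_le_pow_left₀ (norm_nonneg _) h 2
  rw [mul_pow, EuclideanSpace.real_norm_sq_eq, EuclideanSpace.real_norm_sq_eq] at h2
  simpa using h2

lemma frob_mul_le_opN_transpose_mul_frob (C : Matrix (Fin a) (Fin b) ℝ)
    (M : Matrix (Fin b) (Fin c) ℝ) : frob (C * M) ≤ opN Mᵀ * frob C :=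
  frob_le_mul_frob_of_row_sq_le (opN_nonneg _) fun i => by
    simpa [mul_apply_eq_vecMul, ← vecMul_transpose] using sum_mulVec_sq_le Mᵀ (C i)

end OperatorNorm

section OrthonormalColumns

variable {q r : ℕ}

lemma gram_columns (A : Matrix (Fin q) (Fin r) ℝ) :
    gram ℝ (fun k => toLp 2 (Aᵀ k)) = Aᵀ * A := by
  ext k l
  simp [gram_apply, EuclideanSpace.inner_toLp_toLp, mul_apply, dotProduct, mul_comm]

lemma orthonormal_columns_iff (A : Matrix (Fin q) (Fin r) ℝ) :
    Orthonormal ℝ (fun k => toLp 2 (Aᵀ k)) ↔ Aᵀ * A = 1 := by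
  rw [← gram_eq_one_iff_orthonormal, gram_columns]

lemma vecMul_apply_eq_inner_column (A : Matrix (Fin q) (Fin r) ℝ) (x : Fin q → ℝ) (k : Fin r) :
    (x ᵥ* A) k = inner ℝ (toLp 2 (Aᵀ k)) (toLp 2 x) := by
  simp [vecMul, dotProduct, EuclideanSpace.inner_toLp_toLp, mul_comm]

lemma sum_vecMul_sq_le {A : Matrix (Fin q) (Fin r) ℝ} (hA : Aᵀ * A = 1) (x : Fin q → ℝ) :
    ∑ k, (x ᵥ* A) k ^ 2 ≤ ∑ j, x j ^ 2 := by
  have := ((orthonormal_columns_iff A).2 hA).sum_inner_products_le (toLp 2 x) (s := Finset.univ)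
  simpa [vecMul_apply_eq_inner_column, EuclideanSpace.real_norm_sq_eq] using this

lemma frob_mul_le_of_transpose_mul_eq_one {s : ℕ} (C : Matrix (Fin s) (Fin q) ℝ)
    {A : Matrix (Fin q) (Fin r) ℝ} (hA : Aᵀ * A = 1) : frob (C * A) ≤ frob C := by
  simpa using frob_le_mul_frob_of_row_sq_le zero_le_one (M := C * A) (N := C) fun i => by
    simpa [mul_apply_eq_vecMul] using sum_vecMul_sq_le hA (C i)

end OrthonormalColumns

lemma Submodule.exists_le_finrank_eq {K V : Type*} [DivisionRing K] [AddCommGroup V]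
    [Module K V] [FiniteDimensional K V] {n : ℕ} (hn : n ≤ finrank K V) (U : Submodule K V)
    (hU : finrank K U ≤ n) : ∃ W : Submodule K V, U ≤ W ∧ finrank K W = n := by
  induction n with
  | zero => exact ⟨U, le_rfl, Nat.le_zero.mp hU⟩
  | succ n ih =>
    rcases hU.eq_or_lt with hU | hU
    · exact ⟨U, le_rfl, hU⟩
    obtain ⟨W, hUW, hW⟩ := ih (by omega) (by omega)
    have hWtop : W < ⊤ := lt_top_iff_ne_top.2 fun h => by rw [h, finrank_top] at hW; omega
    obtain ⟨v, -, hv⟩ := SetLike.exists_of_lt hWtop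
    exact ⟨W ⊔ Submodule.span K {v}, hUW.trans le_sup_left,
      by rw [finrank_sup_span_singleton hv, hW]⟩

lemma exists_transpose_mul_eq_one_and_mul_eq {s q r : ℕ} (hrq : r ≤ q)
    {C : Matrix (Fin s) (Fin q) ℝ} (hC : C.rank ≤ r) :
    ∃ A : Matrix (Fin q) (Fin r) ℝ, Aᵀ * A = 1 ∧ C * (A * Aᵀ) = C := by
  let V : Submodule ℝ (EuclideanSpace ℝ (Fin q)) :=
    (Submodule.span ℝ (Set.range C.row)).map
      ((WithLp.linearEquiv 2 ℝ (Fin q → ℝ)).symm : (Fin q → ℝ) →ₗ[ℝ] EuclideanSpace ℝ (Fin q))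
  have hV : finrank ℝ V ≤ r := by rwa [LinearEquiv.finrank_map_eq, ← rank_eq_finrank_span_row]
  obtain ⟨W, hVW, hW⟩ := Submodule.exists_le_finrank_eq (by simpa using hrq) V hV
  let b : OrthonormalBasis (Fin r) ℝ W := (stdOrthonormalBasis ℝ W).reindex (finCongr hW)
  let A : Matrix (Fin q) (Fin r) ℝ := of fun j k => (b k : EuclideanSpace ℝ (Fin q)) j
  have hcol : ∀ k, toLp 2 (Aᵀ k) = (b k : EuclideanSpace ℝ (Fin q)) := fun k => rfl
  refine ⟨A, (orthonormal_columns_iff A).1 (b.orthonormal.comp_linearIsometry W.subtypeₗᵢ), ?_⟩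
  · have hrow : ∀ i, toLp 2 (C i) ∈ W := fun i => hVW ⟨C i, Submodule.subset_span ⟨i, rfl⟩, rfl⟩
    ext i j
    have hexp := congr_arg (fun x : W => (x : EuclideanSpace ℝ (Fin q)) j)
      (b.sum_repr' ⟨_, hrow i⟩)
    simp only [Submodule.coe_inner, Submodule.coe_sum, Submodule.coe_smul, WithLp.ofLp_sum,
      Finset.sum_apply, WithLp.ofLp_smul, Pi.smul_apply, smul_eq_mul] at hexp
    rw [← Matrix.mul_assoc, mul_apply]
    simp only [mul_apply_eq_vecMul, vecMul_apply_eq_inner_column, hcol, transpose_apply]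
    exact hexp

lemma frob_sub_mul_transpose_le {s q r : ℕ} {C : Matrix (Fin s) (Fin q) ℝ}
    {A A' : Matrix (Fin q) (Fin r) ℝ} (hCA : C * (A * Aᵀ) = C) (hA' : A'ᵀ * A' = 1)
    (D' : Matrix (Fin s) (Fin r) ℝ) :
    frob (C - D' * A'ᵀ) ≤ opN (A * Aᵀ - A' * A'ᵀ) * frob C + frob (C * A' - D') := by
  have hsymm : (A * Aᵀ - A' * A'ᵀ)ᵀ = A * Aᵀ - A' * A'ᵀ := by
    simp [transpose_sub, transpose_mul]
  have hproj : C - C * (A' * A'ᵀ) = C * (A * Aᵀ - A' * A'ᵀ) := by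
    rw [Matrix.mul_sub, hCA]
  have hfactor : C * (A' * A'ᵀ) - D' * A'ᵀ = (C * A' - D') * A'ᵀ := by
    rw [Matrix.sub_mul, Matrix.mul_assoc]
  calc frob (C - D' * A'ᵀ)
      ≤ frob (C - C * (A' * A'ᵀ)) + frob (C * (A' * A'ᵀ) - D' * A'ᵀ) := frob_sub_le _ _ _
    _ ≤ opN (A * Aᵀ - A' * A'ᵀ) * frob C + frob (C * A' - D') := by
      rw [hproj, hfactor, frob_mul_transpose_of_transpose_mul_eq_one _ hA']
      gcongr
      simpa only [hsymm] using frob_mul_le_opN_transpose_mul_frob C (A * Aᵀ - A' * A'ᵀ)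

theorem stmt17_general {s q r : ℕ} (hrq : r ≤ q) (ε : ℝ)
    (ND : Finset (Matrix (Fin s) (Fin r) ℝ))
    (NA : Finset (Matrix (Fin q) (Fin r) ℝ))
    (hNDsub : ∀ D ∈ ND, frob D ≤ 1)
    (hNAsub : ∀ A ∈ NA, Aᵀ * A = 1)
    (hND : ∀ D : Matrix (Fin s) (Fin r) ℝ, frob D ≤ 1 →
      ∃ D' ∈ ND, frob (D - D') ≤ ε)
    (hNA : ∀ A : Matrix (Fin q) (Fin r) ℝ, Aᵀ * A = 1 →
      ∃ A' ∈ NA, opN (A * Aᵀ - A' * A'ᵀ) ≤ ε) :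
    ∃ N : Finset (Matrix (Fin s) (Fin q) ℝ),
      N.card ≤ ND.card * NA.card ∧
      (∀ Cm ∈ N, Cm.rank ≤ r ∧ frob Cm ≤ 1) ∧
      ∀ Cm : Matrix (Fin s) (Fin q) ℝ, Cm.rank ≤ r → frob Cm ≤ 1 →
        ∃ C' ∈ N, frob (Cm - C') ≤ 2 * ε := by
  classical
  refine ⟨(ND ×ˢ NA).image fun p => p.1 * p.2ᵀ,
    Finset.card_image_le.trans (Finset.card_product _ _).le, ?_, ?_⟩
  · simp only [Finset.mem_image, Finset.mem_product]
    rintro _ ⟨⟨D, A⟩, ⟨hD, hA⟩, rfl⟩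
    exact ⟨(rank_mul_le_left _ _).trans (rank_le_width D),
      (frob_mul_transpose_of_transpose_mul_eq_one D (hNAsub A hA)).trans_le (hNDsub D hD)⟩
  · intro C hrank hC
    obtain ⟨A, hA, hCA⟩ := exists_transpose_mul_eq_one_and_mul_eq hrq hrank
    obtain ⟨A', hA'N, hAA'⟩ := hNA A hA
    have hA' := hNAsub A' hA'N
    obtain ⟨D', hD'N, hCD'⟩ := hND (C * A') ((frob_mul_le_of_transpose_mul_eq_one C hA').trans hC)
    refine ⟨D' * A'ᵀ, Finset.mem_image.2 ⟨(D', A'), Finset.mem_product.2 ⟨hD'N, hA'N⟩, rfl⟩, ?_⟩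
    calc frob (C - D' * A'ᵀ)
        ≤ opN (A * Aᵀ - A' * A'ᵀ) * frob C + frob (C * A' - D') :=
          frob_sub_mul_transpose_le hCA hA' D'
      _ ≤ ε + ε := by
          gcongr
          exact (mul_le_of_le_one_right (opN_nonneg _) hC).trans hAA'
      _ = 2 * ε := by ring

theorem stmt17 {s q r : ℕ} (hrq : r ≤ q) (ε : ℝ) (hε : 0 < ε)
    (ND : Finset (Matrix (Fin s) (Fin r) ℝ))
    (NA : Finset (Matrix (Fin q) (Fin r) ℝ))
    (hNDsub : ∀ D ∈ ND, frob D ≤ 1)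
    (hNAsub : ∀ A ∈ NA, Aᵀ * A = 1)
    (hND : ∀ D : Matrix (Fin s) (Fin r) ℝ, frob D ≤ 1 →
      ∃ D' ∈ ND, frob (D - D') ≤ ε)
    (hNA : ∀ A : Matrix (Fin q) (Fin r) ℝ, Aᵀ * A = 1 →
      ∃ A' ∈ NA, opN (A * Aᵀ - A' * A'ᵀ) ≤ ε) :
    ∃ N : Finset (Matrix (Fin s) (Fin q) ℝ),
      N.card ≤ ND.card * NA.card ∧
      (∀ Cm ∈ N, Cm.rank ≤ r ∧ frob Cm ≤ 1) ∧
      ∀ Cm : Matrix (Fin s) (Fin q) ℝ, Cm.rank ≤ r → frob Cm ≤ 1 →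
        ∃ C' ∈ N, frob (Cm - C') ≤ 2 * ε :=
  stmt17_general hrq ε ND NA hNDsub hNAsub hND hNA
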